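/- Let $T$ be a tree and $X \subseteq V(T)$ with $|X| \geq 3$ such that $T[X]$ is connected and every vertex of $V(T) \setminus X$ is a leaf of $T$. Then there exists $t \in X$ with degree at least $2$ in $T[X]$, and a partition of $N_T(t)$ into $Y_1, Y_2$ such that $|X \cap V(T_{t,Y_i})| \leq \frac{3}{4}|X|$ for each $i \in \{1,2\}$. -/

import Mathlib

open Finset

open scoped Classical

variable {α : Type*}

structure Hypergraph' (α : Type*) where
  verts : Finset α
  edges : Finset (Finset α)
  edge_sub : ∀ e ∈ edges, e ⊆ verts

namespace Hypergraph'

/-- `U` is a subedge of `H`: it is contained in some hyperedge. -/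
def IsSubedge (H : Hypergraph' α) (U : Finset α) : Prop := ∃ e ∈ H.edges, U ⊆ e

/-- `H` is a `(2,d)`-hypergraph: any two distinct edges intersect in at most `d` vertices. -/
def Is2dHypergraph (H : Hypergraph' α) (d : ℕ) : Prop :=
  ∀ e ∈ H.edges, ∀ f ∈ H.edges, e ≠ f → (e ∩ f).card ≤ d

/-- The induced subhypergraph `H[U]`. -/
noncomputable def induce (H : Hypergraph' α) (U : Finset α) : Hypergraph' α where
  verts := U
  edges := (H.edges.image (· ∩ U)).filter (· ≠ ∅)
  edge_sub := by
    intro e he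
    simp only [Finset.mem_filter, Finset.mem_image] at he
    obtain ⟨⟨f, hf, rfl⟩, -⟩ := he
    exact Finset.inter_subset_right

/-- The adjacency graph of a hypergraph: two distinct vertices are adjacent
iff they lie in a common edge. -/
def adjGraph (H : Hypergraph' α) : SimpleGraph α where
  Adj v w := v ≠ w ∧ ∃ e ∈ H.edges, v ∈ e ∧ w ∈ e
  symm := by constructor; rintro v w ⟨hne, e, he, hv, hw⟩; exact ⟨hne.symm, e, he, hw, hv⟩
  loopless := by constructor; rintro v ⟨hne, -⟩; exact hne rfl

/-- Adjacency in `H` avoiding the vertex set `S` (i.e. adjacency in `H[V(H) \ S]`). -/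
def avoidGraph (H : Hypergraph' α) (S : Finset α) : SimpleGraph α where
  Adj v w := v ≠ w ∧ v ∉ S ∧ w ∉ S ∧ ∃ e ∈ H.edges, v ∈ e ∧ w ∈ e
  symm := by constructor; rintro v w ⟨hne, hv, hw, e, he, h1, h2⟩; exact ⟨hne.symm, hw, hv, e, he, h2, h1⟩
  loopless := by constructor; rintro v ⟨hne, -⟩; exact hne rfl

/-- `S` is an `(A,B)`-separator of `H`: no path of `H[V(H) \ S]` joins
a vertex of `A \ S` to a vertex of `B \ S`. -/
def IsSeparator (H : Hypergraph' α) (A B S : Finset α) : Prop :=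
  ∀ a ∈ A, a ∉ S → ∀ b ∈ B, b ∉ S → ¬ (H.avoidGraph S).Reachable a b

/-- `U` has an edge cover of weight at most `k` (edge cover number `ρ(U) ≤ k`). -/
def CoverLE (H : Hypergraph' α) (U : Finset α) (k : ℕ) : Prop :=
  ∃ F : Finset (Finset α), F ⊆ H.edges ∧ U ⊆ F.biUnion id ∧ F.card ≤ k

/-- `(T, B)` is a tree decomposition of `H`. -/
def IsTreeDecomp (H : Hypergraph' α) {ι : Type*} (T : SimpleGraph ι) (B : ι → Finset α) : Prop :=
  T.IsTree ∧ (∀ u, B u ⊆ H.verts) ∧ (∀ e ∈ H.edges, ∃ u, e ⊆ B u) ∧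
  (∀ v ∈ H.verts, (T.induce {u | v ∈ B u}).Connected)

/-- Generalised hypertree width of `H` is at most `k`. -/
def ghwLE (H : Hypergraph' α) (k : ℕ) : Prop :=
  ∃ (ι : Type) (T : SimpleGraph ι) (B : ι → Finset α),
    H.IsTreeDecomp T B ∧ ∀ u, H.CoverLE (B u) k

/-- Two subedges are incompatible if their union is not a subedge. -/
def Incompatible (H : Hypergraph' α) (X Y : Finset α) : Prop := ¬ H.IsSubedge (X ∪ Y)

/-- `U₁,…,U_a, S₁,…,S_b` form an `(a,b)` subedge hypergrid (shyg). -/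
def IsShyg (H : Hypergraph' α) {a b : ℕ} (U : Fin a → Finset α) (S : Fin b → Finset α) : Prop :=
  (∀ i, H.IsSubedge (U i)) ∧ (∀ j, H.IsSubedge (S j)) ∧
  (∀ i i', i ≠ i' → H.Incompatible (U i) (U i')) ∧
  (∀ j j', j ≠ j' → H.Incompatible (S j) (S j')) ∧
  (∀ i j, H.Incompatible (U i) (S j)) ∧
  (∀ i i', i ≠ i' → Disjoint (U i) (U i')) ∧
  (∀ j i, (S j ∩ U i).Nonempty)

/-- A strong shyg: additionally the `S j` intersect pairwise disjointly inside `⋃ U i`. -/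
def IsStrongShyg (H : Hypergraph' α) {a b : ℕ}
    (U : Fin a → Finset α) (S : Fin b → Finset α) : Prop :=
  H.IsShyg U S ∧ ∀ j j', j ≠ j' → S j ∩ S j' ∩ Finset.univ.biUnion U = ∅

/-- `H` has a strong `(a,b)`-shyg. -/
def HasStrongShyg (H : Hypergraph' α) (a b : ℕ) : Prop :=
  ∃ (U : Fin a → Finset α) (S : Fin b → Finset α), H.IsStrongShyg U S

/-- `ext(C, E')`: the edges of `E'` meeting `C`. -/
noncomputable def ext (E' : Finset (Finset α)) (C : Finset α) : Finset (Finset α) :=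
  E'.filter fun e => (e ∩ C).Nonempty

/-- `C` is (the vertex set of) a connected component of `H`. -/
def IsConnComp (H : Hypergraph' α) (C : Finset α) : Prop :=
  ∃ v ∈ H.verts, ∀ w, w ∈ C ↔ w ∈ H.verts ∧ H.adjGraph.Reachable v w

end Hypergraph'

/-- The vertex set of `T_{x,Y}`: the union of all paths of `G` starting at `x`
whose second vertex belongs to `Y`. -/
def subtreeVerts {V : Type*} (G : SimpleGraph V) (x : V) (Y : Set V) : Set V :=
  {v | v = x ∨ ∃ w : G.Walk x v, w.IsPath ∧ w.getVert 1 ∈ Y ∧ ¬ w.Nil}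

/-- The tree `T⁺_{t,Y}`: the restriction of `T` to `s` together with a fresh node `none`
made adjacent to `t`. -/
def plusGraph {ι : Type*} (T : SimpleGraph ι) (s : Set ι) (t : ι) :
    SimpleGraph (Option s) where
  Adj a b :=
    (∃ u v : s, a = some u ∧ b = some v ∧ T.Adj u v) ∨
    (a = none ∧ ∃ v : s, b = some v ∧ (v : ι) = t) ∨
    (b = none ∧ ∃ u : s, a = some u ∧ (u : ι) = t)
  symm := by
    constructor; rintro a b (⟨u, v, rfl, rfl, h⟩ | ⟨rfl, v, rfl, hv⟩ | ⟨rfl, u, rfl, hu⟩)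
    · exact Or.inl ⟨v, u, rfl, rfl, h.symm⟩
    · exact Or.inr (Or.inr ⟨rfl, v, rfl, hv⟩)
    · exact Or.inr (Or.inl ⟨rfl, u, rfl, hu⟩)
  loopless := by
    constructor; rintro a (⟨u, v, rfl, h1, h2⟩ | ⟨rfl, v, h, -⟩ | ⟨rfl, u, h, -⟩)
    · obtain rfl : u = v := Option.some_injective _ h1
      exact T.loopless.irrefl _ h2
    · cases h
    · cases h

/-- `ξ'(n,k,d)` from the paper. -/
def xi' (k d : ℕ) : ℕ → ℕ
  | 0 => (3*k+1)*d+1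
  | n+1 => ((3*k+1)*d)^2 * xi' k d n + 1
namespace TreeBalancedSplitAux

open SimpleGraph

variable {V : Type*} {T : SimpleGraph V}

/-- The branch of `t` through `y` : vertices reachable from `t` by a path whose
second vertex is `y`. -/
def branch (T : SimpleGraph V) (t y : V) : Set V :=
  {v | ∃ p : T.Walk t v, p.IsPath ∧ ¬ p.Nil ∧ p.getVert 1 = y}

lemma walk_eq (hT : T.IsTree) {u v : V} {p q : T.Walk u v} (hp : p.IsPath) (hq : q.IsPath) :
    p = q :=
  ((hT.existsUnique_path u v).unique hp hq)

lemma branch_ne {t y v : V} (h : v ∈ branch T t y) : v ≠ t := by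
  rintro rfl
  obtain ⟨p, hp, hnil, -⟩ := h
  cases p with
  | nil => simp at hnil
  | cons h q =>
    rw [Walk.cons_isPath_iff] at hp
    exact hp.2 q.end_mem_support

lemma branch_adj {t y v : V} (h : v ∈ branch T t y) : T.Adj t y := by
  obtain ⟨p, hp, hnil, h1⟩ := h
  simpa [h1] using p.adj_snd hnil

lemma branch_eq_of_mem (hT : T.IsTree) {t y y' v : V} (h : v ∈ branch T t y)
    (h' : v ∈ branch T t y') : y = y' := by
  obtain ⟨p, hp, hnil, h1⟩ := h
  obtain ⟨q, hq, hnil', h1'⟩ := h'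
  rw [walk_eq hT hp hq] at h1
  rw [h1] at h1'; exact h1'.symm ▸ rfl

lemma branch_dist (hT : T.IsTree) {t y v : V} (h : v ∈ branch T t y) :
    T.dist y v < T.dist t v := by
  obtain ⟨p, hp, hnil, h1⟩ := h
  obtain ⟨q, hq, hlen⟩ := hT.isConnected.exists_path_of_dist t v
  rw [walk_eq hT hp hq] at hnil h1
  cases q with
  | @cons _ m _ hadj r =>
    have h1' : m = y := by
      simpa [Walk.getVert_cons_succ, Walk.getVert_zero] using h1
    subst h1'
    have hd : T.dist m v ≤ r.length := dist_le r
    rw [← hlen]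
    simp only [Walk.length_cons]
    omega
  | nil => simp at hnil

lemma branch_leaf {t y v : V} (hleaf : (T.neighborSet y).ncard = 1) (hadj : T.Adj t y)
    (h : v ∈ branch T t y) : v = y := by
  obtain ⟨p, hp, hnil, h1⟩ := h
  cases p with
  | nil => simp at hnil
  | @cons _ m _ h q =>
    have h1' : m = y := by
      simpa [Walk.getVert_cons_succ, Walk.getVert_zero] using h1
    subst h1'
    cases q with
    | nil => rfl
    | @cons _ z _ h2 r =>
      exfalso
      obtain ⟨a, ha⟩ := Set.ncard_eq_one.mp hleaf
      have hta : t = a := by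
        have ht2 : t ∈ T.neighborSet m := hadj.symm
        rw [ha] at ht2; exact ht2
      have hza : z = a := by
        have hz2 : z ∈ T.neighborSet m := h2
        rw [ha] at hz2; exact hz2
      rw [Walk.cons_isPath_iff] at hp
      apply hp.2
      rw [Walk.support_cons]
      rw [hta, ← hza]
      exact List.mem_cons_of_mem _ r.start_mem_support

lemma exists_branch (hT : T.IsTree) {X : Finset V}
    (hconn : (T.induce (↑X : Set V)).Connected) {t v : V} (ht : t ∈ X) (hv : v ∈ X)
    (hne : v ≠ t) : ∃ y ∈ X, T.Adj t y ∧ v ∈ branch T t y := by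
  obtain ⟨w⟩ := hconn.preconnected ⟨t, ht⟩ ⟨v, hv⟩
  let w' : T.Walk t v := w.map (SimpleGraph.Embedding.induce (↑X : Set V)).toHom
  let p : T.Walk t v := (w'.toPath : T.Path t v).val
  have hppath : p.IsPath := (w'.toPath : T.Path t v).2
  have hps : ∀ u ∈ p.support, u ∈ X := by
    intro u hu
    have h2 : u ∈ (w.map (SimpleGraph.Embedding.induce (↑X : Set V)).toHom).support :=
      Walk.support_toPath_subset_support w' hu
    rw [Walk.support_map] at h2
    obtain ⟨⟨u', hu'⟩, -, rfl⟩ := List.mem_map.mp h2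
    exact hu'
  have hnil : ¬ p.Nil := Walk.not_nil_of_ne (Ne.symm hne)
  have h1le : 1 ≤ p.length := Walk.not_nil_iff_lt_length.mp hnil
  refine ⟨p.getVert 1, hps _ (Walk.mem_support_iff_exists_getVert.mpr ⟨1, rfl, h1le⟩),
    by simpa using p.adj_snd hnil, ⟨p, hppath, hnil, rfl⟩⟩

lemma greedy_choice {β : Type*} (f : β → ℕ) (L : ℕ) (hL : 0 < L) :
    ∀ s : Finset β, L ≤ ∑ b ∈ s, f b →
      ∃ A ⊆ s, ∃ a ∈ A, L ≤ ∑ b ∈ A, f b ∧ ∑ b ∈ A.erase a, f b < L := by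
  intro s
  induction s using Finset.strongInduction with
  | _ s ih =>
    intro hs
    have hsne : s.Nonempty := by
      rcases s.eq_empty_or_nonempty with rfl | h
      · simp at hs; omega
      · exact h
    obtain ⟨a, ha⟩ := hsne
    by_cases h : L ≤ ∑ b ∈ s.erase a, f b
    · obtain ⟨A, hA, a', ha', h1, h2⟩ := ih (s.erase a) (Finset.erase_ssubset ha) h
      exact ⟨A, hA.trans (Finset.erase_subset _ _), a', ha', h1, h2⟩
    · exact ⟨s, Finset.Subset.rfl, a, ha, hs, by omega⟩

lemma select {β : Type*} (S : Finset β) (c : β → ℕ) (n : ℕ) (hn : 3 ≤ n)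
    (htot : ∑ y ∈ S, c y = n - 1) (hmax : ∀ y ∈ S, 2 * c y ≤ n) :
    ∃ A ⊆ S, n ≤ 4 * ∑ y ∈ A, c y ∧ 4 * ∑ y ∈ A, c y ≤ 3 * n - 4 := by
  by_cases hbig : ∃ y ∈ S, n ≤ 4 * c y
  · obtain ⟨y, hy, h4⟩ := hbig
    have h2 := hmax y hy
    refine ⟨{y}, by simpa using hy, ?_, ?_⟩ <;> rw [Finset.sum_singleton] <;> omega
  · push_neg at hbig
    set L := (n + 3) / 4 with hLdef
    have hL1 : n ≤ 4 * L := by omega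
    have hL2 : 4 * L ≤ n + 3 := by omega
    have hLS : L ≤ ∑ y ∈ S, c y := by omega
    obtain ⟨A, hAS, a, haA, h1, h2⟩ := greedy_choice c L (by omega) S hLS
    have hca : 4 * c a < n := hbig a (hAS haA)
    have hsum : ∑ b ∈ A.erase a, c b + c a = ∑ b ∈ A, c b :=
      Finset.sum_erase_add A c haA
    exact ⟨A, hAS, by omega, by omega⟩

end TreeBalancedSplitAux

open TreeBalancedSplitAux in
theorem tree_balanced_split_rel {V : Type*} [Fintype V] (T : SimpleGraph V)
    (hT : T.IsTree) (X : Finset V) (hX : 3 ≤ X.card)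
    (hconn : (T.induce (↑X : Set V)).Connected)
    (hleaf : ∀ v, v ∉ X → (T.neighborSet v).ncard = 1) :
    ∃ t ∈ X, 2 ≤ (T.neighborSet t ∩ (↑X : Set V)).ncard ∧
      ∃ Y1 Y2 : Set V, Y1 ∪ Y2 = T.neighborSet t ∧ Y1 ∩ Y2 = ∅ ∧
        4 * ((↑X : Set V) ∩ subtreeVerts T t Y1).ncard ≤ 3 * X.card ∧
        4 * ((↑X : Set V) ∩ subtreeVerts T t Y2).ncard ≤ 3 * X.card := by
  classical
  set n := X.card with hn
  have hXne : X.Nonempty := Finset.card_pos.mp (by omega)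
  obtain ⟨t, htX, htmin⟩ := X.exists_min_image (fun u => ∑ v ∈ X, T.dist u v) hXne
  set NB : V → Finset V := fun y => X.filter (fun v => v ∈ branch T t y) with hNB
  set S : Finset V := X.filter (fun y => T.Adj t y) with hS
  -- centroid property
  have hcent : ∀ y, T.Adj t y → 2 * (NB y).card ≤ n := by
    intro y hadj
    by_contra hlt
    push_neg at hlt
    have hyX : y ∈ X := by
      by_contra hyX
      have hempty : NB y = ∅ := by
        rw [Finset.eq_empty_iff_forall_notMem]
        intro v hv
        rw [hNB, Finset.mem_filter] at hv
        exact hyX ((branch_leaf (hleaf y hyX) hadj hv.2) ▸ hv.1)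
      rw [hempty, Finset.card_empty] at hlt
      omega
    set P : V → Prop := fun v => v ∈ branch T t y with hP
    have key1 : ∀ v ∈ X.filter P, T.dist y v + 1 ≤ T.dist t v := by
      intro v hv
      exact branch_dist hT (Finset.mem_filter.mp hv).2
    have key2 : ∀ v ∈ X.filter (fun v => ¬ P v), T.dist y v ≤ T.dist t v + 1 := by
      intro v hv
      calc T.dist y v ≤ T.dist y t + T.dist t v := hT.isConnected.dist_triangle
        _ ≤ T.dist t v + 1 := by
            rw [SimpleGraph.dist_eq_one_iff_adj.mpr hadj.symm]; omega
    have b1 : (∑ v ∈ X.filter P, T.dist y v) + (X.filter P).card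
        ≤ ∑ v ∈ X.filter P, T.dist t v := by
      have := Finset.sum_le_sum key1
      simpa [Finset.sum_add_distrib] using this
    have b2 : (∑ v ∈ X.filter (fun v => ¬ P v), T.dist y v)
        ≤ (∑ v ∈ X.filter (fun v => ¬ P v), T.dist t v) + (X.filter (fun v => ¬ P v)).card := by
      have := Finset.sum_le_sum key2
      simpa [Finset.sum_add_distrib] using this
    have hsplit : ∀ u : V, ∑ v ∈ X, T.dist u v
        = ∑ v ∈ X.filter P, T.dist u v + ∑ v ∈ X.filter (fun v => ¬ P v), T.dist u v :=
      fun u => (Finset.sum_filter_add_sum_filter_not X P _).symm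
    have hcard : (X.filter P).card + (X.filter (fun v => ¬ P v)).card = n :=
      Finset.card_filter_add_card_filter_not (p := P)
    have hmin := htmin y hyX
    simp only [hsplit t, hsplit y] at hmin
    have hNBP : (NB y).card = (X.filter P).card := rfl
    omega
  -- branches partition X \ {t}
  have hdisj : ∀ y ∈ S, ∀ y' ∈ S, y ≠ y' → Disjoint (NB y) (NB y') := by
    intro y _ y' _ hne
    rw [Finset.disjoint_left]
    intro v hv hv'
    rw [hNB, Finset.mem_filter] at hv hv'
    exact hne (branch_eq_of_mem hT hv.2 hv'.2)
  have hcover : X.erase t = S.biUnion NB := by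
    ext v
    simp only [Finset.mem_erase, Finset.mem_biUnion, hNB, hS, Finset.mem_filter]
    constructor
    · rintro ⟨hvt, hvX⟩
      obtain ⟨y, hyX, hadj, hb⟩ := exists_branch hT hconn htX hvX hvt
      exact ⟨y, ⟨hyX, hadj⟩, hvX, hb⟩
    · rintro ⟨y, -, hvX, hb⟩
      exact ⟨branch_ne hb, hvX⟩
  have hsum : ∑ y ∈ S, (NB y).card = n - 1 := by
    rw [← Finset.card_biUnion hdisj, ← hcover, Finset.card_erase_of_mem htX]
  -- at least two branches
  have hS2 : 2 ≤ S.card := by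
    by_contra hcon
    push_neg at hcon
    interval_cases h : S.card
    · rw [Finset.card_eq_zero] at h
      rw [h] at hsum
      simp at hsum
      omega
    · obtain ⟨y, hy⟩ := Finset.card_eq_one.mp h
      rw [hy, Finset.sum_singleton] at hsum
      have hadj : T.Adj t y := by
        have : y ∈ S := by rw [hy]; exact Finset.mem_singleton_self y
        rw [hS, Finset.mem_filter] at this
        exact this.2
      have := hcent y hadj
      omega
  -- select the split
  obtain ⟨A, hAS, hA1, hA2⟩ := select S (fun y => (NB y).card) n hX hsum
    (fun y hy => hcent y (Finset.mem_filter.mp (hS ▸ hy)).2)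
  -- general bound
  have hbound : ∀ (Y : Set V) (B : Finset V), (∀ y, y ∈ B ↔ y ∈ S ∧ y ∈ Y) →
      ((↑X : Set V) ∩ subtreeVerts T t Y).ncard ≤ 1 + ∑ y ∈ B, (NB y).card := by
    intro Y B hB
    have hsub : (↑X : Set V) ∩ subtreeVerts T t Y ⊆ ↑(insert t (B.biUnion NB)) := by
      rintro v ⟨hvX, hvs⟩
      rcases hvs with rfl | ⟨w, hw, h1, hnil⟩
      · simp
      · have hb : v ∈ branch T t (w.getVert 1) := ⟨w, hw, hnil, rfl⟩
        have hadj : T.Adj t (w.getVert 1) := branch_adj hb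
        have hyX : w.getVert 1 ∈ X := by
          by_contra hyX
          have := branch_leaf (hleaf _ hyX) hadj hb
          rw [this] at hvX
          exact hyX hvX
        have hyS : w.getVert 1 ∈ S := by
          rw [hS, Finset.mem_filter]; exact ⟨hyX, hadj⟩
        have hvNB : v ∈ NB (w.getVert 1) := by
          rw [hNB]; exact Finset.mem_filter.mpr ⟨hvX, hb⟩
        exact Finset.mem_coe.mpr (Finset.mem_insert_of_mem
          (Finset.mem_biUnion.mpr ⟨_, (hB _).mpr ⟨hyS, h1⟩, hvNB⟩))
    calc ((↑X : Set V) ∩ subtreeVerts T t Y).ncard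
        ≤ (↑(insert t (B.biUnion NB)) : Set V).ncard :=
          Set.ncard_le_ncard hsub (Set.toFinite _)
      _ = (insert t (B.biUnion NB)).card := Set.ncard_coe_finset _
      _ ≤ (B.biUnion NB).card + 1 := Finset.card_insert_le _ _
      _ ≤ 1 + ∑ y ∈ B, (NB y).card := by
          have := Finset.card_biUnion_le (s := B) (t := NB)
          omega
  refine ⟨t, htX, ?_, (↑A : Set V), T.neighborSet t \ (↑A : Set V), ?_, ?_, ?_, ?_⟩
  · have heq : T.neighborSet t ∩ (↑X : Set V) = ↑S := by
      ext y
      simp only [Set.mem_inter_iff, SimpleGraph.mem_neighborSet, Finset.coe_filter,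
        Set.mem_setOf_eq, hS, Finset.mem_coe, Finset.mem_filter]
      tauto
    rw [heq, Set.ncard_coe_finset]
    exact hS2
  · apply Set.union_diff_cancel
    intro y hy
    rw [Finset.mem_coe] at hy
    exact (Finset.mem_filter.mp (hAS hy)).2
  · ext y; simp
  · have hb := hbound (↑A : Set V) A
      (fun y => ⟨fun h => ⟨hAS h, Finset.mem_coe.mpr h⟩, fun h => Finset.mem_coe.mp h.2⟩)
    omega
  · have hiff : ∀ y, y ∈ S \ A ↔ y ∈ S ∧ y ∈ (T.neighborSet t \ (↑A : Set V)) := by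
      intro y
      rw [Finset.mem_sdiff]
      constructor
      · rintro ⟨h1, h3⟩
        have hadj : T.Adj t y := by
          have h1' := h1
          rw [hS, Finset.mem_filter] at h1'
          exact h1'.2
        exact ⟨h1, hadj, fun hc => h3 (Finset.mem_coe.mp hc)⟩
      · rintro ⟨h1, -, h3⟩
        exact ⟨h1, fun hc => h3 (Finset.mem_coe.mpr hc)⟩
    have hb := hbound (T.neighborSet t \ (↑A : Set V)) (S \ A) hiff
    have hsd : ∑ y ∈ S \ A, (NB y).card + ∑ y ∈ A, (NB y).card = ∑ y ∈ S, (NB y).card :=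
      Finset.sum_sdiff hAS
    omega
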